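/- arXiv:1902.00901 — 2 statements merged into one kernel-verified Lean document; each statement's English description precedes it below -/
import Mathlib

section
/- Let k₁, k₂ be N×N diagonal matrices with strictly positive diagonal entries and let σ > 0. The 2N×2N block matrix Δ = [[σ k₁, −I], [σ² k₂, 0]] has the property that −Δ is Hurwitz, i.e., every eigenvalue of −Δ has strictly negative real part. -/
private lemma quad_root_re_pos (b c : ℝ) (hb : 0 < b) (hc : 0 < c) (z : ℂ)
    (h : z^2 - (b:ℂ)*z + (c:ℂ) = 0) : 0 < z.re := by
  have hre := congrArg Complex.re h
  have him := congrArg Complex.im h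
  simp [pow_two, Complex.mul_re, Complex.mul_im] at hre him
  rcases mul_eq_zero.mp (show z.im * (2*z.re - b) = 0 by ring_nf; ring_nf at him; linarith)
    with hq | hp
  · nlinarith [sq_nonneg z.re]
  · nlinarith

/-- The block matrix Δ = [[σk₁, −I],[σ²k₂, 0]] with positive diagonal k₁,k₂ and σ>0
has −Δ Hurwitz: every eigenvalue of −Δ has strictly negative real part. -/
theorem neg_block_matrix_hurwitz {N : ℕ} (k₁ k₂ : Fin N → ℝ)
    (hk₁ : ∀ i, 0 < k₁ i) (hk₂ : ∀ i, 0 < k₂ i) (σ : ℝ) (hσ : 0 < σ)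
    (Δ : Matrix (Fin N ⊕ Fin N) (Fin N ⊕ Fin N) ℝ)
    (hΔ : Δ = Matrix.fromBlocks (σ • Matrix.diagonal k₁) (-1 : Matrix (Fin N) (Fin N) ℝ)
        (σ ^ 2 • Matrix.diagonal k₂) (0 : Matrix (Fin N) (Fin N) ℝ)) :
    ∀ μ ∈ spectrum ℂ ((-Δ).map Complex.ofReal), μ.re < 0 := by
  intro μ hμ
  -- extract an eigenvector
  rw [spectrum.mem_iff, Matrix.isUnit_iff_isUnit_det, isUnit_iff_ne_zero, not_ne_iff] at hμ
  obtain ⟨v, hv0, hv⟩ := Matrix.exists_mulVec_eq_zero_iff.mpr hμ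
  rw [Matrix.sub_mulVec] at hv
  have halg : (algebraMap ℂ (Matrix (Fin N ⊕ Fin N) (Fin N ⊕ Fin N) ℂ) μ).mulVec v
      = μ • v := by
    funext i
    simp [Matrix.algebraMap_eq_diagonal, Matrix.mulVec_diagonal]
  rw [halg] at hv
  have heig : ((-Δ).map Complex.ofReal).mulVec v = μ • v := (sub_eq_zero.mp hv).symm
  -- the eigen-equation for Δ over ℂ
  have hmap : Δ.map Complex.ofReal =
      Matrix.fromBlocks ((σ:ℂ) • Matrix.diagonal (fun i => (k₁ i : ℂ))) (-1)
        ((σ:ℂ)^2 • Matrix.diagonal (fun i => (k₂ i : ℂ))) 0 := by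
    subst hΔ
    ext (i | i) (j | j) <;>
      simp [Matrix.diagonal_apply, Matrix.one_apply, apply_ite Complex.ofReal]
  have hDv : (Matrix.fromBlocks ((σ:ℂ) • Matrix.diagonal (fun i => (k₁ i : ℂ))) (-1)
        ((σ:ℂ)^2 • Matrix.diagonal (fun i => (k₂ i : ℂ))) 0).mulVec v = (-μ) • v := by
    have hAneg : (-Δ).map Complex.ofReal = -(Δ.map Complex.ofReal) := by
      ext i j; simp
    rw [hAneg, Matrix.neg_mulVec, hmap] at heig
    have := congrArg Neg.neg heig
    simpa [neg_smul] using this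
  -- componentwise equations
  have key : ∀ i : Fin N,
      (σ:ℂ) * k₁ i * v (Sum.inl i) - v (Sum.inr i) = (-μ) * v (Sum.inl i) ∧
      (σ:ℂ)^2 * k₂ i * v (Sum.inl i) = (-μ) * v (Sum.inr i) := by
    intro i
    have h1 := congrFun hDv (Sum.inl i)
    have h2 := congrFun hDv (Sum.inr i)
    simp [Matrix.mulVec, dotProduct, Fintype.sum_sum_type, Matrix.diagonal,
      Finset.mul_sum, mul_ite, Finset.sum_ite_eq, sub_eq_add_neg, Matrix.one_apply,
      ite_mul] at h1 h2
    exact ⟨by linear_combination h1, by linear_combination h2⟩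
  -- the top half of v is nonzero somewhere
  have hx : ∃ i : Fin N, v (Sum.inl i) ≠ 0 := by
    by_contra hall
    push_neg at hall
    apply hv0
    funext j
    rcases j with i | i
    · exact hall i
    · have h1 := (key i).1
      rw [hall i] at h1
      simpa using h1
  obtain ⟨i, hxi⟩ := hx
  have h1 := (key i).1
  have h2 := (key i).2
  -- λ = -μ satisfies the quadratic λ² - σk₁λ + σ²k₂ = 0
  have hquad : ((-μ)^2 - ((σ * k₁ i : ℝ) : ℂ) * (-μ) + ((σ^2 * k₂ i : ℝ) : ℂ))
      * v (Sum.inl i) = 0 := by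
    push_cast
    linear_combination μ * h1 + h2
  have hquad' : (-μ)^2 - ((σ * k₁ i : ℝ) : ℂ) * (-μ) + ((σ^2 * k₂ i : ℝ) : ℂ) = 0 :=
    (mul_eq_zero.mp hquad).resolve_right hxi
  have hpos := quad_root_re_pos (σ * k₁ i) (σ^2 * k₂ i)
    (mul_pos hσ (hk₁ i)) (mul_pos (pow_pos hσ 2) (hk₂ i)) (-μ) hquad'
  simpa using neg_pos.mp (by simpa using hpos)
end

section
/- Let ζ₁, γ : [t₀,∞) → ℝ^N with γ = ζ̇₁ + c ζ₁ for a diagonal positive matrix c = diag{c_i}, and suppose γ̇ = −k_s γ − β sgn(ζ₁) + N_c(t) with N_c continuously differentiable, and N_c, Ṅ_c bounded. If β_i ≥ (max_j c_j / min_j c_j)·sup_t ‖N_c(t)‖₁ + (1/min_j c_j)·sup_t ‖Ṅ_c(t)‖₁ for all i, then the function V₃(t) = ζ₁(t₀)ᵀβ sgn(ζ₁(t₀)) − ζ₁(t₀)ᵀ N_c(t₀) − ∫_{t₀}^t γ(τ)ᵀ(N_c(τ) − β sgn(ζ₁(τ))) dτ is nonnegative for all t ≥ t₀. -/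
open Finset

/-! Fix a component and write f = ζ₁ᵢ, g = N_cᵢ, so that f' = γᵢ - cᵢ f. The integrand of V₃ splits
as (γ g - cβ|f|) - β f' sgn f. The second part integrates to β (|f t| - |f t₀|): |f| has derivative
f' sgn f off the countable set of zeros of f at which f' ≠ 0. The first part is dominated by the
derivative of f g, since (f g)' - (γ g - cβ|f|) = f g' - c f g + cβ|f| ≥ |f| (cβ - |g'| - c|g|) ≥ 0
by the gain condition on β. Hence V₃(t) ≥ β|f t| - f t · g t ≥ 0. -/

section

open Set MeasureTheory Filter Topology intervalIntegral

namespace Real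

theorem sign_eq_coe_sign (x : ℝ) : Real.sign x = (SignType.sign x : ℝ) := by
  rcases lt_trichotomy x 0 with h | rfl | h
  · simp [sign_of_neg h, h]
  · simp [sign_zero]
  · simp [sign_of_pos h, h]

theorem self_mul_sign (x : ℝ) : x * Real.sign x = |x| := by
  rw [sign_eq_coe_sign, _root_.self_mul_sign]

theorem abs_sign_le_one (x : ℝ) : |Real.sign x| ≤ 1 := by
  rcases sign_apply_eq x with h | h | h <;> simp [h]

theorem measurable_sign : Measurable Real.sign :=
  measurable_const.ite measurableSet_Iio (measurable_const.ite measurableSet_Ioi measurable_const)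

end Real

theorem HasDerivAt.abs_of_eq_zero {f : ℝ → ℝ} {x : ℝ} (hf : HasDerivAt f 0 x) (hx : f x = 0) :
    HasDerivAt (fun y => |f y|) 0 x := by
  rw [hasDerivAt_iff_isLittleO] at hf ⊢
  simp only [hx, abs_zero, smul_zero, sub_zero] at hf ⊢
  simpa [Real.norm_eq_abs] using hf.norm_left

theorem HasDerivAt.abs_of_ne_zero_or_deriv_eq_zero {f : ℝ → ℝ} {f' x : ℝ}
    (hf : HasDerivAt f f' x) (h : f x ≠ 0 ∨ f' = 0) :
    HasDerivAt (fun y => |f y|) (Real.sign (f x) * f') x := by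
  by_cases hx : f x = 0
  · obtain rfl : f' = 0 := h.resolve_left (not_not.mpr hx)
    simpa using hf.abs_of_eq_zero hx
  · rw [Real.sign_eq_coe_sign]
    exact (hasDerivAt_abs hx).comp x hf

theorem countable_setOf_eq_zero_deriv_ne_zero {f f' : ℝ → ℝ} {s : Set ℝ}
    (hf : ∀ x ∈ s, HasDerivAt f (f' x) x) : {x ∈ s | f x = 0 ∧ f' x ≠ 0}.Countable := by
  set A := {x ∈ s | f x = 0 ∧ f' x ≠ 0}
  refine (countable_setOfPred_isolated_right_within (s := A)).mono fun x hx => ?_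
  refine ⟨hx, ?_⟩
  have hne : ∀ᶠ z in 𝓝[A ∩ Ioi x] x, f z ≠ f x :=
    nhdsWithin_mono x (fun z hz => ne_of_gt hz.2) ((hf x hx.1).eventually_ne hx.2.2)
  rw [← eventually_false_iff_eq_bot]
  filter_upwards [hne, self_mem_nhdsWithin] with z hz hzA
  exact hz (hzA.1.2.1.trans hx.2.1.symm)

theorem IntervalIntegrable.mul_sign_comp {f g : ℝ → ℝ} {a b : ℝ}
    (hg : IntervalIntegrable g volume a b) (hf : ContinuousOn f (uIcc a b)) :
    IntervalIntegrable (fun x => g x * Real.sign (f x)) volume a b := by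
  rw [intervalIntegrable_iff] at hg ⊢
  refine hg.mul_bdd (c := 1) ?_ (Eventually.of_forall fun x => Real.abs_sign_le_one (f x))
  exact (Real.measurable_sign.comp_aemeasurable
    ((hf.mono uIoc_subset_uIcc).aestronglyMeasurable measurableSet_uIoc).aemeasurable)
    |>.aestronglyMeasurable

theorem intervalIntegrable_mul_sub_mul_sign {f γ g : ℝ → ℝ} {a b β : ℝ}
    (hf : ContinuousOn f (uIcc a b)) (hγ : ContinuousOn γ (uIcc a b))
    (hg : ContinuousOn g (uIcc a b)) :
    IntervalIntegrable (fun x => γ x * (g x - β * Real.sign (f x))) volume a b := by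
  simp_rw [mul_sub, mul_left_comm _ β]
  exact (hγ.mul hg).intervalIntegrable.sub
    ((hγ.intervalIntegrable.mul_sign_comp hf).const_mul β)

theorem integral_mul_sign_eq_abs_sub_abs {f f' : ℝ → ℝ} {a b : ℝ} (hab : a ≤ b)
    (hf : ∀ x ∈ Icc a b, HasDerivAt f (f' x) x) (hf' : IntervalIntegrable f' volume a b) :
    ∫ x in a..b, f' x * Real.sign (f x) = |f b| - |f a| := by
  have hfc : ContinuousOn f (Icc a b) := HasDerivAt.continuousOn hf
  refine integral_eq_of_hasDerivAt_off_countable_of_le _ _ hab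
    (countable_setOf_eq_zero_deriv_ne_zero hf) hfc.abs (fun x hx => ?_)
    (hf'.mul_sign_comp (by rwa [uIcc_of_le hab]))
  have hxI : x ∈ Icc a b := Ioo_subset_Icc_self hx.1
  rw [mul_comm]
  refine (hf x hxI).abs_of_ne_zero_or_deriv_eq_zero ?_
  by_contra! h
  exact hx.2 ⟨hxI, h⟩

theorem integral_mul_sub_mul_sign_le {f γ g g' : ℝ → ℝ} {a b c β : ℝ} (hab : a ≤ b)
    (hc : 0 ≤ c) (hf : ∀ x ∈ Icc a b, HasDerivAt f (γ x - c * f x) x)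
    (hγ : ContinuousOn γ (Icc a b)) (hg : ∀ x ∈ Icc a b, HasDerivAt g (g' x) x)
    (hβ : ∀ x ∈ Ioo a b, |g' x| + c * |g x| ≤ c * β) :
    ∫ x in a..b, γ x * (g x - β * Real.sign (f x)) ≤
      (f b * g b - β * |f b|) - (f a * g a - β * |f a|) := by
  have hfc : ContinuousOn f (Icc a b) := HasDerivAt.continuousOn hf
  have hgc : ContinuousOn g (Icc a b) := HasDerivAt.continuousOn hg
  have hf'int : IntervalIntegrable (fun x => γ x - c * f x) volume a b :=
    (hγ.sub (continuousOn_const.mul hfc)).intervalIntegrable_of_Icc hab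
  have hφc : ContinuousOn (fun x => γ x * g x - c * β * |f x|) (Icc a b) :=
    (hγ.mul hgc).sub (continuousOn_const.mul hfc.abs)
  have hφint : IntervalIntegrable (fun x => γ x * g x - c * β * |f x|) volume a b :=
    hφc.intervalIntegrable_of_Icc hab
  have hprod : ∫ x in a..b, γ x * g x - c * β * |f x| ≤ f b * g b - f a * g a := by
    refine integral_le_sub_of_hasDeriv_right_of_le hab (hfc.mul hgc)
      (fun x hx => ((hf x (Ioo_subset_Icc_self hx)).mul
        (hg x (Ioo_subset_Icc_self hx))).hasDerivWithinAt)
      (hφc.integrableOn_Icc (μ := volume)) fun x hx => ?_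
    have hfg : f x * g x ≤ |f x| * |g x| := by rw [← abs_mul]; exact le_abs_self _
    have hfg' : -(|f x| * |g' x|) ≤ f x * g' x := by rw [← abs_mul]; exact neg_abs_le _
    nlinarith [mul_le_mul_of_nonneg_left (hβ x hx) (abs_nonneg (f x)),
      mul_le_mul_of_nonneg_left hfg hc]
  have hsign := integral_mul_sign_eq_abs_sub_abs hab hf hf'int
  have hsplit : ∫ x in a..b, γ x * (g x - β * Real.sign (f x)) =
      (∫ x in a..b, γ x * g x - c * β * |f x|) -
        β * ∫ x in a..b, (γ x - c * f x) * Real.sign (f x) := by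
    rw [← intervalIntegral.integral_const_mul,
      ← intervalIntegral.integral_sub hφint ((hf'int.mul_sign_comp
        (by rwa [uIcc_of_le hab])).const_mul β)]
    congr 1 with x
    rw [← Real.self_mul_sign]
    ring
  rw [hsplit, hsign]
  linarith

theorem sub_integral_mul_sub_mul_sign_nonneg {f γ g g' : ℝ → ℝ} {a b c β : ℝ} (hab : a ≤ b)
    (hc : 0 < c) (hf : ∀ x ∈ Icc a b, HasDerivAt f (γ x - c * f x) x)
    (hγ : ContinuousOn γ (Icc a b)) (hg : ∀ x ∈ Icc a b, HasDerivAt g (g' x) x)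
    (hβ : ∀ x ∈ Icc a b, |g' x| + c * |g x| ≤ c * β) :
    0 ≤ f a * (β * Real.sign (f a)) - f a * g a -
      ∫ x in a..b, γ x * (g x - β * Real.sign (f x)) := by
  have hle := integral_mul_sub_mul_sign_le hab hc.le hf hγ hg
    fun x hx => hβ x (Ioo_subset_Icc_self hx)
  have hgb : |g b| ≤ β :=
    le_of_mul_le_mul_left (by linarith [abs_nonneg (g' b), hβ b (right_mem_Icc.2 hab)]) hc
  have hfgb : f b * g b ≤ |f b| * β :=
    (le_abs_self _).trans ((abs_mul _ _).trans_le (mul_le_mul_of_nonneg_left hgb (abs_nonneg _)))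
  rw [mul_left_comm, Real.self_mul_sign]
  linarith

theorem abs_add_mul_abs_le_mul_of_le_div_add_div {m M c β u v B B' : ℝ} (hm : 0 < m)
    (hmc : m ≤ c) (hcM : c ≤ M) (hu : |u| ≤ B') (hv : |v| ≤ B)
    (hβ : M / m * B + B' / m ≤ β) : |u| + c * |v| ≤ c * β := by
  have hβm : M * B + B' ≤ m * β := by
    calc M * B + B' = m * (M / m * B + B' / m) := by field_simp
      _ ≤ m * β := mul_le_mul_of_nonneg_left hβ hm.le
  have hcv : c * |v| ≤ M * B :=
    (mul_le_mul_of_nonneg_left hv (hm.le.trans hmc)).trans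
      (mul_le_mul_of_nonneg_right hcM ((abs_nonneg v).trans hv))
  have hβ0 : 0 ≤ β := by
    nlinarith [abs_nonneg u, mul_nonneg (hm.le.trans hmc) (abs_nonneg v)]
  nlinarith [mul_le_mul_of_nonneg_right hmc hβ0]

end

theorem rise_auxiliary_nonneg_general {N : ℕ} [NeZero N] (t₀ : ℝ)
    (ζ₁ γ Nc Nc' : ℝ → Fin N → ℝ) (c ks β : Fin N → ℝ)
    (hc : ∀ i, 0 < c i)
    (hζ : ∀ t, t₀ ≤ t → ∀ i,
      HasDerivAt (fun s => ζ₁ s i) (γ t i - c i * ζ₁ t i) t)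
    (hγ : ∀ t, t₀ ≤ t → ∀ i,
      HasDerivAt (fun s => γ s i)
        (-(ks i * γ t i) - β i * Real.sign (ζ₁ t i) + Nc t i) t)
    (hNc : ∀ t, t₀ ≤ t → ∀ i, HasDerivAt (fun s => Nc s i) (Nc' t i) t)
    (BN BD : ℝ)
    (hBN : ∀ t, t₀ ≤ t → ∑ i, |Nc t i| ≤ BN)
    (hBD : ∀ t, t₀ ≤ t → ∑ i, |Nc' t i| ≤ BD)
    (hβ : ∀ i,
      (univ.sup' univ_nonempty c / univ.inf' univ_nonempty c) * BN
        + BD / univ.inf' univ_nonempty c ≤ β i) :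
    ∀ t, t₀ ≤ t →
      0 ≤ (∑ i, ζ₁ t₀ i * (β i * Real.sign (ζ₁ t₀ i))) - (∑ i, ζ₁ t₀ i * Nc t₀ i)
          - ∫ τ in t₀..t, ∑ i, γ τ i * (Nc τ i - β i * Real.sign (ζ₁ τ i)) := by
  intro t ht
  have hm : 0 < univ.inf' univ_nonempty c := (lt_inf'_iff _).2 fun i _ => hc i
  have hcont : ∀ {F F' : ℝ → Fin N → ℝ},
      (∀ t, t₀ ≤ t → ∀ i, HasDerivAt (fun s => F s i) (F' t i) t) →
      ∀ i, ContinuousOn (fun s => F s i) (Set.uIcc t₀ t) := fun hF i =>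
    HasDerivAt.continuousOn fun x hx => hF x (Set.uIcc_of_le ht ▸ hx).1 i
  have hint : ∀ i, IntervalIntegrable
      (fun τ => γ τ i * (Nc τ i - β i * Real.sign (ζ₁ τ i))) MeasureTheory.volume t₀ t := fun i =>
    intervalIntegrable_mul_sub_mul_sign (hcont hζ i) (hcont hγ i) (hcont hNc i)
  rw [intervalIntegral.integral_finsetSum fun i _ => hint i, ← sum_sub_distrib, ← sum_sub_distrib]
  refine sum_nonneg fun i _ => sub_integral_mul_sub_mul_sign_nonneg ht (hc i)
    (fun τ hτ => hζ τ hτ.1 i) (Set.uIcc_of_le ht ▸ hcont hγ i) (fun τ hτ => hNc τ hτ.1 i)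
    fun τ hτ => abs_add_mul_abs_le_mul_of_le_div_add_div hm (inf'_le _ (mem_univ i))
      (le_sup' _ (mem_univ i))
      ((single_le_sum (fun j _ => abs_nonneg (Nc' τ j)) (mem_univ i)).trans (hBD τ hτ.1))
      ((single_le_sum (fun j _ => abs_nonneg (Nc τ j)) (mem_univ i)).trans (hBN τ hτ.1)) (hβ i)

/-- RISE auxiliary-function nonnegativity: with γ = ζ̇₁ + cζ₁ and
γ̇ = −k_sγ − β sgn(ζ₁) + N_c(t), if each β_i dominates
(max c / min c)·sup‖N_c‖₁ + sup‖Ṅ_c‖₁ / min c, then V₃ ≥ 0. -/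
theorem rise_auxiliary_nonneg {N : ℕ} [NeZero N] (t₀ : ℝ)
    (ζ₁ γ Nc Nc' : ℝ → Fin N → ℝ) (c ks β : Fin N → ℝ)
    (hc : ∀ i, 0 < c i) (hks : ∀ i, 0 < ks i) (hβpos : ∀ i, 0 < β i)
    (hζ : ∀ t, t₀ ≤ t → ∀ i,
      HasDerivAt (fun s => ζ₁ s i) (γ t i - c i * ζ₁ t i) t)
    (hγ : ∀ t, t₀ ≤ t → ∀ i,
      HasDerivAt (fun s => γ s i)
        (-(ks i * γ t i) - β i * Real.sign (ζ₁ t i) + Nc t i) t)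
    (hNc : ∀ t, t₀ ≤ t → ∀ i, HasDerivAt (fun s => Nc s i) (Nc' t i) t)
    (BN BD : ℝ)
    (hBN : ∀ t, t₀ ≤ t → ∑ i, |Nc t i| ≤ BN)
    (hBD : ∀ t, t₀ ≤ t → ∑ i, |Nc' t i| ≤ BD)
    (hβ : ∀ i,
      (univ.sup' univ_nonempty c / univ.inf' univ_nonempty c) * BN
        + BD / univ.inf' univ_nonempty c ≤ β i) :
    ∀ t, t₀ ≤ t →
      0 ≤ (∑ i, ζ₁ t₀ i * (β i * Real.sign (ζ₁ t₀ i))) - (∑ i, ζ₁ t₀ i * Nc t₀ i)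
          - ∫ τ in t₀..t, ∑ i, γ τ i * (Nc τ i - β i * Real.sign (ζ₁ τ i)) :=
  rise_auxiliary_nonneg_general t₀ ζ₁ γ Nc Nc' c ks β hc hζ hγ hNc BN BD hBN hBD hβ
end
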